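/- For each fixed n ≥ 1, lim_{m→∞} B_n^(m) / B_n^(m-1) = 1. -/
import Mathlib

/-- Stirling numbers of the second kind. -/
def stirling : ℕ → ℕ → ℕ
  | 0, 0 => 1
  | 0, _ + 1 => 0
  | _ + 1, 0 => 0
  | n + 1, k + 1 => (k + 1) * stirling n (k + 1) + stirling n k

/-- Higher order Bell numbers: `higherBell m n` is `B_n^(m)`. -/
def higherBell : ℕ → ℕ → ℕ
  | 0, _ => 1
  | _ + 1, 0 => 1
  | m + 1, n + 1 => ∑ k ∈ Finset.Icc 1 (n + 1), higherBell m k * stirling (n + 1) k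

lemma stirling_eq_zero : ∀ n k, n < k → stirling n k = 0
  | 0, _ + 1, _ => rfl
  | n + 1, k + 1, h => by
    rw [stirling, stirling_eq_zero n (k+1) (by omega), stirling_eq_zero n k (by omega)]
    simp

lemma stirling_self : ∀ n, stirling n n = 1
  | 0 => rfl
  | n + 1 => by
    rw [stirling, stirling_eq_zero n (n+1) (by omega), stirling_self n]
    simp

lemma one_le_stirling_succ (n : ℕ) : 1 ≤ stirling (n + 2) (n + 1) := by
  rw [stirling, stirling_self]
  omega

lemma higherBell_one : ∀ m, higherBell m 1 = 1
  | 0 => rfl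
  | m + 1 => by
    rw [higherBell, Finset.Icc_self, Finset.sum_singleton, higherBell_one m,
      stirling_self]

lemma one_le_higherBell : ∀ m n, 1 ≤ higherBell m n
  | 0, _ => le_refl 1
  | _ + 1, 0 => le_refl 1
  | m + 1, n + 1 => by
    rw [higherBell]
    calc 1 ≤ higherBell m (n+1) * stirling (n+1) (n+1) := by
            rw [stirling_self]; simpa using one_le_higherBell m (n+1)
      _ ≤ _ := Finset.single_le_sum (f := fun k => higherBell m k * stirling (n+1) k)
            (fun i _ => Nat.zero_le _) (Finset.mem_Icc.mpr ⟨by omega, le_refl _⟩)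

lemma higherBell_mono : ∀ m n, higherBell m n ≤ higherBell (m + 1) n
  | 0, 0 => le_refl 1
  | 0, n + 1 => by
    show 1 ≤ higherBell 1 (n+1)
    exact one_le_higherBell 1 (n+1)
  | m + 1, 0 => le_refl 1
  | m + 1, n + 1 => by
    rw [higherBell, higherBell]
    exact Finset.sum_le_sum fun k _ =>
      Nat.mul_le_mul_right _ (higherBell_mono m k)

lemma choose_le_higherBell : ∀ m j, Nat.choose m j ≤ higherBell m (j + 1)
  | 0, 0 => le_refl 1
  | 0, j + 1 => by simp [higherBell]
  | m + 1, 0 => by simp [higherBell_one, one_le_higherBell]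
  | m + 1, i + 1 => by
    rw [higherBell]
    have hsub : ({i + 1, i + 2} : Finset ℕ) ⊆ Finset.Icc 1 (i + 2) := by
      intro x hx
      simp only [Finset.mem_insert, Finset.mem_singleton] at hx
      rcases hx with rfl | rfl <;> simp [Finset.mem_Icc]
    calc Nat.choose (m+1) (i+1) = Nat.choose m i + Nat.choose m (i+1) := by
          rw [Nat.choose_succ_succ]
      _ ≤ higherBell m (i+1) * stirling (i+2) (i+1)
            + higherBell m (i+2) * stirling (i+2) (i+2) := by
          rw [stirling_self]
          have h1 := choose_le_higherBell m i
          have h2 := choose_le_higherBell m (i+1)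
          have h3 := one_le_stirling_succ i
          have h4 : higherBell m (i+1) ≤ higherBell m (i+1) * stirling (i+2) (i+1) :=
            Nat.le_mul_of_pos_right _ h3
          have h2' : Nat.choose m (i+1) ≤ higherBell m (i+2) := h2
          omega
      _ = ∑ k ∈ ({i + 1, i + 2} : Finset ℕ), higherBell m k * stirling (i+2) k := by
          rw [Finset.sum_pair (by omega)]
      _ ≤ _ := Finset.sum_le_sum_of_subset hsub

lemma higherBell_succ_le (n C : ℕ)
    (hC : ∀ k m, k ≤ n → higherBell m (k + 1) ≤ C * (m + 1) ^ k) (m : ℕ) :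
    higherBell (m + 1) (n + 2) ≤ higherBell m (n + 2) +
      C * (∑ k ∈ Finset.Icc 1 (n + 1), stirling (n + 2) k) * (m + 1) ^ n := by
  rw [higherBell]
  rw [show n + 1 + 1 = n + 2 from rfl]
  rw [Finset.sum_Icc_succ_top (by omega : 1 ≤ n + 2)]
  rw [stirling_self, Nat.mul_one, Nat.add_comm]
  refine Nat.add_le_add_left ?_ _
  calc ∑ k ∈ Finset.Icc 1 (n + 1), higherBell m k * stirling (n + 2) k
      ≤ ∑ k ∈ Finset.Icc 1 (n + 1), (C * (m + 1) ^ n) * stirling (n + 2) k := by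
        apply Finset.sum_le_sum
        intro k hk
        simp only [Finset.mem_Icc] at hk
        obtain ⟨j, rfl⟩ : ∃ j, k = j + 1 := ⟨k - 1, by omega⟩
        have := hC j m (by omega)
        have hpow : (m + 1) ^ j ≤ (m + 1) ^ n := Nat.pow_le_pow_right (by omega) (by omega)
        exact Nat.mul_le_mul_right _ (this.trans (Nat.mul_le_mul_left _ hpow))
    _ = C * (∑ k ∈ Finset.Icc 1 (n + 1), stirling (n + 2) k) * (m + 1) ^ n := by
        rw [← Finset.mul_sum]; ring

lemma higherBell_upper : ∀ n, ∃ C : ℕ, 1 ≤ C ∧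
    ∀ k m, k ≤ n → higherBell m (k + 1) ≤ C * (m + 1) ^ k := by
  intro n
  induction n with
  | zero =>
    exact ⟨1, le_refl 1, fun k m hk => by
      interval_cases k; simp [higherBell_one]⟩
  | succ n ih =>
    obtain ⟨C, hC1, hC⟩ := ih
    set T : ℕ := ∑ k ∈ Finset.Icc 1 (n + 1), stirling (n + 2) k with hT
    -- increment bound
    have hinc : ∀ m, higherBell (m + 1) (n + 2) ≤
        higherBell m (n + 2) + C * T * (m + 1) ^ n := fun m => by
      simpa [hT] using higherBell_succ_le n C hC m
    have hmain : ∀ m, higherBell m (n + 2) ≤ 1 + C * T * m ^ (n + 1) := by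
      intro m
      induction m with
      | zero => simp [higherBell]
      | succ m ihm =>
        calc higherBell (m + 1) (n + 2) ≤ higherBell m (n + 2) + C * T * (m + 1) ^ n :=
              hinc m
          _ ≤ 1 + C * T * m ^ (n + 1) + C * T * (m + 1) ^ n := by omega
          _ = 1 + C * T * (m ^ (n + 1) + (m + 1) ^ n) := by ring
          _ ≤ 1 + C * T * (m + 1) ^ (n + 1) := by
              have h1 : m ^ (n + 1) + (m + 1) ^ n ≤ (m + 1) ^ (n + 1) := by
                have h0 : m ^ n * m ≤ (m + 1) ^ n * m :=
                  Nat.mul_le_mul_right m (Nat.pow_le_pow_left (by omega) n)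
                calc m ^ (n + 1) + (m + 1) ^ n = m ^ n * m + (m + 1) ^ n := by ring
                  _ ≤ (m + 1) ^ n * m + (m + 1) ^ n := by omega
                  _ = (m + 1) ^ (n + 1) := by ring
              exact Nat.add_le_add_left (Nat.mul_le_mul_left _ h1) 1
    refine ⟨C + C * T, by omega, fun k m hk => ?_⟩
    rcases Nat.lt_or_ge k (n + 1) with h | h
    · calc higherBell m (k + 1) ≤ C * (m + 1) ^ k := hC k m (by omega)
        _ ≤ (C + C * T) * (m + 1) ^ k := Nat.mul_le_mul_right _ (by omega)
    · have hk2 : k = n + 1 := by omega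
      subst hk2
      calc higherBell m (n + 2) ≤ 1 + C * T * m ^ (n + 1) := hmain m
        _ ≤ C * (m + 1) ^ (n + 1) + C * T * (m + 1) ^ (n + 1) := by
            have h1 : 1 ≤ C * (m + 1) ^ (n + 1) :=
              Nat.one_le_iff_ne_zero.mpr (by positivity)
            have h2 : m ^ (n + 1) ≤ (m + 1) ^ (n + 1) := Nat.pow_le_pow_left (by omega) _
            exact Nat.add_le_add h1 (Nat.mul_le_mul_left _ h2)
        _ = (C + C * T) * (m + 1) ^ (n + 1) := by ring

open Filter in
lemma tendsto_pow_div_choose (i : ℕ) :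
    Tendsto (fun m : ℕ => ((m : ℝ) + 1) ^ i / (Nat.choose m (i + 1) : ℝ))
      atTop (nhds 0) := by
  have t1 : Tendsto (fun m : ℕ => (m : ℝ) - i) atTop atTop := by
    simpa [sub_eq_add_neg] using
      tendsto_atTop_add_const_right atTop (-(i : ℝ)) tendsto_natCast_atTop_atTop
  have tinv : Tendsto (fun m : ℕ => ((m : ℝ) - i)⁻¹) atTop (nhds 0) :=
    t1.inv_tendsto_atTop
  have t2 : Tendsto (fun m : ℕ => ((m : ℝ) + 1) / ((m : ℝ) - i)) atTop (nhds 1) := by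
    have heq : ∀ᶠ m : ℕ in atTop,
        1 + ((i : ℝ) + 1) * ((m : ℝ) - i)⁻¹ = ((m : ℝ) + 1) / ((m : ℝ) - i) := by
      filter_upwards [eventually_ge_atTop (i + 1)] with m hm
      have h : (0 : ℝ) < (m : ℝ) - i := by
        have : (i : ℝ) + 1 ≤ m := by exact_mod_cast hm
        linarith
      field_simp
      ring
    have : Tendsto (fun m : ℕ => 1 + ((i : ℝ) + 1) * ((m : ℝ) - i)⁻¹) atTop
        (nhds (1 + ((i : ℝ) + 1) * 0)) :=
      tendsto_const_nhds.add (tendsto_const_nhds.mul tinv)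
    simpa using this.congr' heq
  have th : Tendsto (fun m : ℕ =>
      ((i + 1).factorial : ℝ) * (((m : ℝ) + 1) / ((m : ℝ) - i)) ^ i * ((m : ℝ) - i)⁻¹)
      atTop (nhds 0) := by
    have h : Tendsto (fun m : ℕ =>
        ((i + 1).factorial : ℝ) * (((m : ℝ) + 1) / ((m : ℝ) - i)) ^ i * ((m : ℝ) - i)⁻¹)
        atTop (nhds (((i + 1).factorial : ℝ) * 1 ^ i * 0)) :=
      (tendsto_const_nhds.mul (t2.pow i)).mul tinv
    simpa using h
  apply squeeze_zero' ?_ ?_ th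
  · filter_upwards [eventually_ge_atTop (i + 1)] with m hm
    positivity
  · filter_upwards [eventually_ge_atTop (i + 1)] with m hm
    have hmi : (0 : ℝ) < (m : ℝ) - i := by
      have : (i : ℝ) + 1 ≤ m := by exact_mod_cast hm
      linarith
    have hc : (0 : ℝ) < (Nat.choose m (i + 1) : ℝ) := by
      exact_mod_cast Nat.choose_pos (by omega : i + 1 ≤ m)
    have key : ((m : ℝ) - i) ^ (i + 1) ≤ ((i + 1).factorial : ℝ) * (Nat.choose m (i + 1) : ℝ) := by
      have hnat : (m - i) ^ (i + 1) ≤ (i + 1).factorial * Nat.choose m (i + 1) := by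
        have h1 := Nat.pow_sub_le_descFactorial m (i + 1)
        rw [Nat.descFactorial_eq_factorial_mul_choose] at h1
        simpa [Nat.succ_sub_succ] using h1
      have hcast : ((m - i : ℕ) : ℝ) = (m : ℝ) - i := by
        have : i ≤ m := by omega
        push_cast [this]
        ring
      calc ((m : ℝ) - i) ^ (i + 1) = ((m - i : ℕ) : ℝ) ^ (i + 1) := by rw [hcast]
        _ ≤ ((i + 1).factorial : ℝ) * (Nat.choose m (i + 1) : ℝ) := by exact_mod_cast hnat
    have heq : ((i + 1).factorial : ℝ) * (((m : ℝ) + 1) / ((m : ℝ) - i)) ^ i * ((m : ℝ) - i)⁻¹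
        = (((i + 1).factorial : ℝ) * ((m : ℝ) + 1) ^ i) / ((m : ℝ) - i) ^ (i + 1) := by
      rw [div_pow]
      field_simp
      ring
    rw [heq, div_le_div_iff₀ hc (by positivity)]
    have hnn : (0 : ℝ) ≤ ((m : ℝ) + 1) ^ i := by positivity
    calc ((m : ℝ) + 1) ^ i * ((m : ℝ) - i) ^ (i + 1)
        ≤ ((m : ℝ) + 1) ^ i * (((i + 1).factorial : ℝ) * (Nat.choose m (i + 1) : ℝ)) :=
          mul_le_mul_of_nonneg_left key hnn
      _ = ((i + 1).factorial : ℝ) * ((m : ℝ) + 1) ^ i * (Nat.choose m (i + 1) : ℝ) := by ring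

open Filter in
theorem stmt9 (n : ℕ) (hn : 1 ≤ n) :
    Filter.Tendsto (fun m : ℕ => (higherBell (m + 1) n : ℝ) / (higherBell m n : ℝ))
      Filter.atTop (nhds 1) := by
  match n, hn with
  | 1, _ =>
    have : (fun m : ℕ => (higherBell (m + 1) 1 : ℝ) / (higherBell m 1 : ℝ))
        = fun _ => (1 : ℝ) := by
      funext m; simp [higherBell_one]
    rw [this]
    exact tendsto_const_nhds
  | (i + 2), _ =>
    obtain ⟨C, hC1, hC⟩ := higherBell_upper i
    set T : ℕ := ∑ k ∈ Finset.Icc 1 (i + 1), stirling (i + 2) k with hT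
    have hinc : ∀ m, higherBell (m + 1) (i + 2) ≤
        higherBell m (i + 2) + C * T * (m + 1) ^ i := fun m => by
      simpa [hT] using higherBell_succ_le i C hC m
    have hpos : ∀ m, (0 : ℝ) < (higherBell m (i + 2) : ℝ) := fun m => by
      exact_mod_cast one_le_higherBell m (i + 2)
    -- lower bound
    have hlow : ∀ m : ℕ, (1 : ℝ) ≤ (higherBell (m + 1) (i + 2) : ℝ) / (higherBell m (i + 2) : ℝ) := by
      intro m
      rw [one_le_div (hpos m)]
      exact_mod_cast higherBell_mono m (i + 2)
    -- upper bound
    have hupp : ∀ᶠ m : ℕ in atTop,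
        (higherBell (m + 1) (i + 2) : ℝ) / (higherBell m (i + 2) : ℝ)
          ≤ 1 + (C * T : ℝ) * (((m : ℝ) + 1) ^ i / (Nat.choose m (i + 1) : ℝ)) := by
      filter_upwards [eventually_ge_atTop (i + 1)] with m hm
      have hc : (0 : ℝ) < (Nat.choose m (i + 1) : ℝ) := by
        exact_mod_cast Nat.choose_pos (by omega : i + 1 ≤ m)
      have hcb : (Nat.choose m (i + 1) : ℝ) ≤ (higherBell m (i + 2) : ℝ) := by
        exact_mod_cast choose_le_higherBell m (i + 1)
      have h1 : (higherBell (m + 1) (i + 2) : ℝ) / (higherBell m (i + 2) : ℝ)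
          ≤ ((higherBell m (i + 2) : ℝ) + (C * T : ℝ) * ((m : ℝ) + 1) ^ i)
              / (higherBell m (i + 2) : ℝ) := by
        apply (div_le_div_iff_of_pos_right (hpos m)).mpr
        have := hinc m
        push_cast
        exact_mod_cast this
      have h2 : ((higherBell m (i + 2) : ℝ) + (C * T : ℝ) * ((m : ℝ) + 1) ^ i)
            / (higherBell m (i + 2) : ℝ)
          = 1 + (C * T : ℝ) * ((m : ℝ) + 1) ^ i / (higherBell m (i + 2) : ℝ) := by
        rw [add_div, div_self (hpos m).ne']
      have h3 : (C * T : ℝ) * ((m : ℝ) + 1) ^ i / (higherBell m (i + 2) : ℝ)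
          ≤ (C * T : ℝ) * ((m : ℝ) + 1) ^ i / (Nat.choose m (i + 1) : ℝ) :=
        div_le_div_of_nonneg_left (by positivity) hc hcb
      calc (higherBell (m + 1) (i + 2) : ℝ) / (higherBell m (i + 2) : ℝ)
          ≤ _ := h1
        _ = _ := h2
        _ ≤ 1 + (C * T : ℝ) * ((m : ℝ) + 1) ^ i / (Nat.choose m (i + 1) : ℝ) := by
            linarith
        _ = 1 + (C * T : ℝ) * (((m : ℝ) + 1) ^ i / (Nat.choose m (i + 1) : ℝ)) := by
            rw [mul_div_assoc]
    have hup_tendsto : Tendsto (fun m : ℕ =>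
        1 + (C * T : ℝ) * (((m : ℝ) + 1) ^ i / (Nat.choose m (i + 1) : ℝ)))
        atTop (nhds 1) := by
      have h : Tendsto (fun m : ℕ =>
          1 + (C * T : ℝ) * (((m : ℝ) + 1) ^ i / (Nat.choose m (i + 1) : ℝ)))
          atTop (nhds (1 + (C * T : ℝ) * 0)) :=
        tendsto_const_nhds.add (tendsto_const_nhds.mul (tendsto_pow_div_choose i))
      simpa using h
    exact tendsto_of_tendsto_of_tendsto_of_le_of_le' tendsto_const_nhds hup_tendsto
      (Eventually.of_forall hlow) hupp
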